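/- Setting t = 1 in Y(t,x) = (1 − tx + (tx−x)C(x/(1−tx)))/((1 − x·C(x/(1−tx)))(1 − tx)) yields Y(1,x) = 1/(1 − x·C(x/(1−x))) = 2/(1 + x + √((1−x)(1−5x))), where C is the Catalan generating function. -/

import Mathlib

/-- The Catalan generating function `C(y) = (1 - √(1-4y))/(2y)`. -/
noncomputable def Cfun (y : ℝ) : ℝ := (1 - Real.sqrt (1 - 4 * y)) / (2 * y)

/-- `Y(t,x)`, the closed form from Lemma 6 of the paper. -/
noncomputable def Yfun (t x : ℝ) : ℝ :=
  (1 - t * x + (t * x - x) * Cfun (x / (1 - t * x))) /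
    ((1 - x * Cfun (x / (1 - t * x))) * (1 - t * x))

/-! At `t = 1` the numerator of `Y` collapses to `1 - x`, which cancels. Substituting
`y = x/(1-x)` turns the discriminant `1 - 4y` into `(1-x)(1-5x)/(1-x)²`, so `C(x/(1-x))`
is a quadratic irrationality in `√((1-x)(1-5x))` and `1 - x C(x/(1-x))` becomes
`(1 + x + √((1-x)(1-5x)))/2`. -/

theorem Yfun_one {x : ℝ} (hx : x ≠ 1) : Yfun 1 x = 1 / (1 - x * Cfun (x / (1 - x))) := by
  have h : 1 - x ≠ 0 := sub_ne_zero.mpr hx.symm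
  simp only [Yfun, one_mul, sub_self, zero_mul, add_zero]
  rw [div_mul_cancel_right₀ h, one_div]

theorem sqrt_one_sub_four_mul_div_one_sub {x : ℝ} (hx : x < 1) :
    Real.sqrt (1 - 4 * (x / (1 - x))) = Real.sqrt ((1 - x) * (1 - 5 * x)) / (1 - x) := by
  have h : 0 < 1 - x := sub_pos.mpr hx
  have hdisc : 1 - 4 * (x / (1 - x)) = (1 - x) * (1 - 5 * x) / (1 - x) ^ 2 := by
    field_simp
    ring
  rw [hdisc, Real.sqrt_div' _ (sq_nonneg _), Real.sqrt_sq h.le]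

theorem Cfun_div_one_sub {x : ℝ} (hx : x < 1) :
    Cfun (x / (1 - x)) = (1 - x - Real.sqrt ((1 - x) * (1 - 5 * x))) / (2 * x) := by
  have h : 1 - x ≠ 0 := (sub_pos.mpr hx).ne'
  rw [Cfun, sqrt_one_sub_four_mul_div_one_sub hx]
  field_simp

theorem one_sub_mul_Cfun_div_one_sub {x : ℝ} (hx : x < 1) :
    1 - x * Cfun (x / (1 - x)) = (1 + x + Real.sqrt ((1 - x) * (1 - 5 * x))) / 2 := by
  rcases eq_or_ne x 0 with rfl | hx0
  · norm_num
  rw [Cfun_div_one_sub hx]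
  field_simp
  ring

theorem stmt18_general (x : ℝ) (h5 : x < 1 / 5) :
    Yfun 1 x = 1 / (1 - x * Cfun (x / (1 - x))) ∧
    1 / (1 - x * Cfun (x / (1 - x))) =
      2 / (1 + x + Real.sqrt ((1 - x) * (1 - 5 * x))) := by
  have hx : x < 1 := by linarith
  refine ⟨Yfun_one hx.ne, ?_⟩
  rw [one_sub_mul_Cfun_div_one_sub hx, one_div_div]

theorem stmt18 (x : ℝ) (h0 : 0 < x) (h5 : x < 1 / 5) :
    Yfun 1 x = 1 / (1 - x * Cfun (x / (1 - x))) ∧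
    1 / (1 - x * Cfun (x / (1 - x))) =
      2 / (1 + x + Real.sqrt ((1 - x) * (1 - 5 * x))) :=
  stmt18_general x h5
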